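/- For any decision problem D = (S, S_T, P₀, n, i, A, T, u, F) satisfying the termination assumption, there exists λ ≥ 0 such that for all joint dependant policies π, π' ∈ Δ(A)^n with ‖π − π'‖₁ < 1, one has |E[u|π] − E[u|π']| ≤ λ · ‖π − π'‖₁ / (1 − ‖π − π'‖₁), where ‖π − π'‖₁ = Σ_{j=1}^n Σ_{a∈A} |π_j(a) − π'_j(a)|. -/

import Mathlib

open Filter Asymptotics Topology
open scoped ENNReal

/-- `π` is a probability distribution on the finite set `A`. -/
def IsDist {A : Type} [Fintype A] (π : A → ℝ) : Prop :=
  (∀ a, 0 ≤ π a) ∧ ∑ a, π a = 1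

/-- The point mass at `s`. -/
def unitMass {S : Type} [DecidableEq S] (s : S) : S → ℝ :=
  fun s' => if s' = s then 1 else 0

/-- A decision problem `(S, S_T, P₀, n, i, A, T, u, F)`. -/
structure DP (S A : Type) [Fintype S] [Fintype A] (n : ℕ) where
  isTerminal : S → Bool
  P0 : S → ℝ
  idx : S → Fin n
  tr : S → A → S → ℝ
  u : S → ℝ
  F : (A → ℝ) → Fin n → A → ℝ
  P0_nonneg : ∀ s, 0 ≤ P0 s
  P0_sum : ∑ s, P0 s = 1
  P0_term : ∀ s, isTerminal s = true → P0 s = 0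
  tr_nonneg : ∀ s a s', 0 ≤ tr s a s'
  tr_sum : ∀ s a, ∑ s', tr s a s' = 1
  F_dist : ∀ π, IsDist π → ∀ j, IsDist (F π j)

namespace DP

variable {S A : Type} [Fintype S] [Fintype A] {n : ℕ}

/-- Transition probabilities when acting according to a mixed policy `τ`. -/
def Tpol (D : DP S A n) (s : S) (τ : A → ℝ) (s' : S) : ℝ :=
  ∑ a, τ a * D.tr s a s'

/-- One-step transition matrix of the Markov chain induced by joint dependant policy `π`. -/
def step (D : DP S A n) (π : Fin n → A → ℝ) (s s' : S) : ℝ :=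
  D.Tpol s (π (D.idx s)) s'

/-- A history: a nonempty list of states, all nonterminal except the last one, terminal. -/
def isHistory (D : DP S A n) (l : List S) : Bool :=
  match l.getLast? with
  | none => false
  | some s => D.isTerminal s && l.dropLast.all fun s' => !D.isTerminal s'

end DP

/-- Product of one-step transition probabilities along a list of states. -/
def pathWeight {S : Type} (step : S → S → ℝ) : List S → ℝ
  | [] => 1
  | [_] => 1
  | s :: s' :: r => step s s' * pathWeight step (s' :: r)

namespace DP

variable {S A : Type} [Fintype S] [Fintype A] {n : ℕ}

/-- Expected value of `f` over histories, with initial state distribution `ρ` and joint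
dependant policy `π`. -/
noncomputable def lval (D : DP S A n) (ρ : S → ℝ) (π : Fin n → A → ℝ)
    (f : List S → ℝ) : ℝ :=
  ∑' l : List S,
    if D.isHistory l then ((l.head?.map ρ).getD 0) * pathWeight (D.step π) l * f l else 0

/-- The ex ante expected utility `E[u|π]` of joint dependant policy `π`, started from `ρ`. -/
noncomputable def EUj (D : DP S A n) (ρ : S → ℝ) (π : Fin n → A → ℝ) : ℝ :=
  D.lval ρ π fun l => (l.getLast?.map D.u).getD 0

/-- The ex ante expected utility `E[u|π₀]` of agent policy `π₀`. -/
noncomputable def exAnte (D : DP S A n) (π₀ : A → ℝ) : ℝ :=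
  D.EUj D.P0 (D.F π₀)

/-- `E^s[u|π₀]`, the expected utility starting deterministically from state `s`. -/
noncomputable def EUat [DecidableEq S] (D : DP S A n) (s : S) (π₀ : A → ℝ) : ℝ :=
  D.EUj (unitMass s) (D.F π₀)

/-- `E[#(s)|π₀]`, the expected number of visits to state `s` under agent policy `π₀`. -/
noncomputable def visits [DecidableEq S] (D : DP S A n) (π₀ : A → ℝ) (s : S) : ℝ :=
  D.lval D.P0 (D.F π₀) fun l => (l.count s : ℝ)

/-- Termination assumption: from every nonterminal state and under every joint dependant
policy, the chain almost surely reaches a terminal state. -/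
def Terminates [DecidableEq S] (D : DP S A n) : Prop :=
  ∀ s : S, D.isTerminal s = false → ∀ π : Fin n → A → ℝ, (∀ j, IsDist (π j)) →
    D.lval (unitMass s) π (fun _ => 1) = 1

end DP

/-- The directional derivative of `f` at `π₀` in direction `a` exists and is `≤ 0`. -/
def dirDerivLE {A : Type} [Fintype A] [DecidableEq A]
    (f : (A → ℝ) → ℝ) (π₀ : A → ℝ) (a : A) : Prop :=
  ∃ d : ℝ, d ≤ 0 ∧
    Tendsto (fun ε : ℝ => (f (π₀ + ε • (unitMass a - π₀)) - f π₀) / ε)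
      (𝓝[>] (0:ℝ)) (𝓝 d)


/-! The ex ante expected utility is an absorbing-chain quantity: with `Q_π` the transition
matrix with the terminal rows zeroed, `E[u|π] = P₀ ⬝ N_π v`, where `N_π = (1 - Q_π)⁻¹` and `v` is
`u` on terminal states and `0` elsewhere. Termination forces `Q_π ^ t → 0`, hence `1 - Q_π` is
invertible, and `π ↦ N_π` is continuous on the compact set `Δ(A)ⁿ`, so bounded there by some
`C`. The resolvent identity `N_π - N_π' = N_π (Q_π - Q_π') N_π'` then gives the Lipschitz bound
`|E[u|π] - E[u|π']| ≤ C² ‖v‖ ‖π - π'‖₁`, stronger than the claimed one. -/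

attribute [local instance] Matrix.linftyOpNormedRing

open Matrix

def listsLengthLE (S : Type*) [Fintype S] [DecidableEq S] : ℕ → Finset (List S)
  | 0 => {[]}
  | m + 1 => insert [] ((Finset.univ ×ˢ listsLengthLE S m).image fun p => p.1 :: p.2)

section ListsLengthLE

variable {S : Type*} [Fintype S] [DecidableEq S]

@[simp]
lemma mem_listsLengthLE {m : ℕ} {l : List S} : l ∈ listsLengthLE S m ↔ l.length ≤ m := by
  induction m generalizing l with
  | zero => simp [listsLengthLE]
  | succ m ih => cases l <;> simp [listsLengthLE, ih]

lemma monotone_listsLengthLE : Monotone (listsLengthLE S) :=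
  fun _ _ hm _ hl => mem_listsLengthLE.2 ((mem_listsLengthLE.1 hl).trans hm)

lemma sum_listsLengthLE_succ {M : Type*} [AddCommMonoid M] {g : List S → M} (hg : g [] = 0)
    (m : ℕ) : ∑ l ∈ listsLengthLE S (m + 1), g l = ∑ s, ∑ l ∈ listsLengthLE S m, g (s :: l) := by
  rw [listsLengthLE, Finset.sum_insert (by simp), hg, zero_add,
    Finset.sum_image (fun p _ q _ h => Prod.ext (List.cons.inj h).1 (List.cons.inj h).2),
    Finset.sum_product]

lemma tendsto_sum_listsLengthLE {M : Type*} [AddCommMonoid M] [TopologicalSpace M]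
    {g : List S → M} (hg : Summable g) :
    Tendsto (fun m => ∑ l ∈ listsLengthLE S m, g l) atTop (𝓝 (∑' l, g l)) :=
  hg.hasSum.comp (tendsto_atTop_finset_of_monotone monotone_listsLengthLE
    fun l => ⟨l.length, mem_listsLengthLE.2 le_rfl⟩)

end ListsLengthLE

lemma pathWeight_nonneg {S : Type} {step : S → S → ℝ} (h : ∀ s s', 0 ≤ step s s') :
    ∀ l : List S, 0 ≤ pathWeight step l
  | [] | [_] => zero_le_one
  | _ :: s' :: r => mul_nonneg (h _ _) (pathWeight_nonneg h (s' :: r))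

lemma unitMass_dotProduct {S : Type} [Fintype S] [DecidableEq S] (s : S) (x : S → ℝ) :
    unitMass s ⬝ᵥ x = x s := by
  simp [unitMass, dotProduct]

lemma abs_dotProduct_le_norm {S : Type} [Fintype S] {ρ : S → ℝ} (hρ : IsDist ρ) (x : S → ℝ) :
    |ρ ⬝ᵥ x| ≤ ‖x‖ :=
  calc |ρ ⬝ᵥ x| ≤ ∑ s, ρ s * ‖x‖ := by
        refine (Finset.abs_sum_le_sum_abs _ _).trans (Finset.sum_le_sum fun s _ => ?_)
        rw [abs_mul, abs_of_nonneg (hρ.1 s)]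
        exact mul_le_mul_of_nonneg_left (norm_le_pi_norm x s) (hρ.1 s)
    _ = ‖x‖ := by rw [← Finset.sum_mul, hρ.2, one_mul]

lemma norm_le_of_forall_sum_abs_le {S : Type} [Fintype S] [DecidableEq S] {M : Matrix S S ℝ}
    {r : ℝ} (hr : 0 ≤ r) (h : ∀ s, ∑ s', |M s s'| ≤ r) : ‖M‖ ≤ r := by
  rw [linfty_opNorm_def, ← NNReal.coe_mk r hr, NNReal.coe_le_coe]
  refine Finset.sup_le fun s _ => ?_
  rw [← NNReal.coe_le_coe, NNReal.coe_sum]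
  simpa using h s

lemma isCompact_setOf_forall_isDist (ι A : Type) [Fintype A] :
    IsCompact {π : ι → A → ℝ | ∀ j, IsDist (π j)} := by
  convert isCompact_univ_pi fun _ : ι => isCompact_stdSimplex ℝ A using 1
  ext π
  simp [IsDist, stdSimplex]

def lastValue {S : Type} (g : S → ℝ) (l : List S) : ℝ :=
  (l.getLast?.map g).getD 0

lemma abs_lastValue_le {S : Type} [Fintype S] (g : S → ℝ) (l : List S) :
    |lastValue g l| ≤ ‖g‖ := by
  cases h : l.getLast? <;> simp [lastValue, h, norm_le_pi_norm g, ← Real.norm_eq_abs]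

lemma lastValue_cons {S : Type} (g : S → ℝ) (s : S) {l : List S} (hl : l ≠ []) :
    lastValue g (s :: l) = lastValue g l := by
  obtain ⟨b, r, rfl⟩ := List.exists_cons_of_ne_nil hl
  simp [lastValue, List.getLast?_cons_cons]

namespace DP

section

variable {S A : Type} [Fintype S] [Fintype A] {n : ℕ} (D : DP S A n)

lemma isHistory_singleton (s : S) : D.isHistory [s] = D.isTerminal s := by
  simp [isHistory]

lemma isHistory_cons_cons (a b : S) (r : List S) :
    D.isHistory (a :: b :: r) = (!D.isTerminal a && D.isHistory (b :: r)) := by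
  obtain ⟨c, hc⟩ :=
    Option.ne_none_iff_exists'.1 (mt List.getLast?_eq_none_iff.1 (List.cons_ne_nil b r))
  simp only [isHistory, List.getLast?_cons_cons, hc, List.dropLast_cons_cons, List.all_cons]
  cases D.isTerminal a <;> cases D.isTerminal c <;> simp

lemma step_nonneg {π : Fin n → A → ℝ} (hπ : ∀ j, IsDist (π j)) (s s' : S) :
    0 ≤ D.step π s s' :=
  Finset.sum_nonneg fun a _ => mul_nonneg ((hπ _).1 a) (D.tr_nonneg s a s')

lemma sum_step {π : Fin n → A → ℝ} (hπ : ∀ j, IsDist (π j)) (s : S) :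
    ∑ s', D.step π s s' = 1 := by
  simp only [step, Tpol]
  rw [Finset.sum_comm]
  simp [← Finset.mul_sum, D.tr_sum, (hπ _).2]

noncomputable def lvalTerm (ρ : S → ℝ) (π : Fin n → A → ℝ) (f : List S → ℝ) (l : List S) : ℝ :=
  if D.isHistory l then ((l.head?.map ρ).getD 0) * pathWeight (D.step π) l * f l else 0

/-- `(Qᵗ) s s'` is the probability of reaching `s'` from `s` in `t` steps through nonterminal
states only. -/
noncomputable def transientMatrix (π : Fin n → A → ℝ) : Matrix S S ℝ :=
  Matrix.of fun s s' => if D.isTerminal s then 0 else D.step π s s'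

def terminalVec (g : S → ℝ) : S → ℝ :=
  fun s => if D.isTerminal s then g s else 0

variable {D} {ρ : S → ℝ} {π : Fin n → A → ℝ} {f : List S → ℝ}

lemma lval_eq_tsum : D.lval ρ π f = ∑' l, D.lvalTerm ρ π f l := rfl

@[simp]
lemma lvalTerm_nil : D.lvalTerm ρ π f [] = 0 := rfl

lemma lvalTerm_eq_mul (l : List S) :
    D.lvalTerm ρ π f l = D.lvalTerm ρ π (fun _ => 1) l * f l := by
  unfold lvalTerm; split_ifs <;> simp

lemma lvalTerm_cons_eq_mul (s : S) (l : List S) :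
    D.lvalTerm ρ π f (s :: l) = ρ s * D.lvalTerm (fun _ => 1) π f (s :: l) := by
  unfold lvalTerm; split_ifs <;> simp [mul_assoc]

lemma lvalTerm_lastValue_one :
    D.lvalTerm ρ π (lastValue 1) = D.lvalTerm ρ π fun _ => 1 := by
  ext (_ | ⟨s, l⟩)
  · rfl
  · rw [lvalTerm_eq_mul]
    cases l <;> simp [lastValue, List.getLast?_eq_some_getLast]

lemma EUj_eq_lval_lastValue (ρ : S → ℝ) (π : Fin n → A → ℝ) :
    D.EUj ρ π = D.lval ρ π (lastValue D.u) := rfl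

lemma transientMatrix_nonneg (hπ : ∀ j, IsDist (π j)) (s s' : S) :
    0 ≤ D.transientMatrix π s s' := by
  simp only [transientMatrix, of_apply]
  split_ifs
  exacts [le_rfl, D.step_nonneg hπ s s']

lemma transientMatrix_mulVec_one (hπ : ∀ j, IsDist (π j)) :
    D.transientMatrix π *ᵥ 1 = 1 - D.terminalVec 1 := by
  ext s
  cases h : D.isTerminal s <;>
    simp [mulVec, dotProduct, transientMatrix, terminalVec, h, D.sum_step hπ]

variable (D) in
lemma continuous_transientMatrix : Continuous D.transientMatrix := by
  refine continuous_matrix fun s s' => ?_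
  simp only [transientMatrix, of_apply]
  split_ifs
  · exact continuous_const
  · simp only [step, Tpol]
    fun_prop

end

variable {S A : Type} [Fintype S] [Fintype A] [DecidableEq S] {n : ℕ} {D : DP S A n}
  {ρ : S → ℝ} {π π' : Fin n → A → ℝ} {f : List S → ℝ}

variable (D) in
/-- `∑ₜ Qᵗ`, the fundamental matrix of the absorbing chain. -/
noncomputable def fundamentalMatrix (π : Fin n → A → ℝ) : Matrix S S ℝ :=
  (1 - D.transientMatrix π)⁻¹

lemma lvalTerm_eq_sum_unitMass (l : List S) :
    D.lvalTerm ρ π f l = ∑ s, ρ s * D.lvalTerm (unitMass s) π f l := by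
  cases l with
  | nil => simp
  | cons a l =>
    simp_rw [lvalTerm_cons_eq_mul a l (ρ := ρ), lvalTerm_cons_eq_mul a l (ρ := unitMass _)]
    simp [unitMass]

lemma lvalTerm_unitMass_one_nonneg (hπ : ∀ j, IsDist (π j)) (s : S) (l : List S) :
    0 ≤ D.lvalTerm (unitMass s) π (fun _ => 1) l := by
  unfold lvalTerm
  split_ifs
  · refine mul_nonneg (mul_nonneg ?_ (pathWeight_nonneg (D.step_nonneg hπ) l)) zero_le_one
    cases l <;> simp [unitMass]; split_ifs <;> norm_num
  · exact le_rfl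

lemma lvalTerm_cons (g : S → ℝ) (s : S) (l : List S) :
    D.lvalTerm ρ π (lastValue g) (s :: l) =
      ρ s * ((if l = [] then D.terminalVec g s else 0) +
        ∑ s', D.transientMatrix π s s' * D.lvalTerm (unitMass s') π (lastValue g) l) := by
  cases l with
  | nil =>
    cases h : D.isTerminal s <;>
      simp [lvalTerm, isHistory_singleton, h, terminalVec, pathWeight, lastValue]
  | cons b r =>
    simp_rw [lvalTerm_cons_eq_mul b r (ρ := unitMass _), unitMass, if_neg (List.cons_ne_nil b r),
      zero_add, ite_mul, one_mul, zero_mul, mul_ite, mul_zero, Finset.sum_ite_eq]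
    cases h : D.isTerminal s <;> cases hb : D.isHistory (b :: r) <;>
      simp [lvalTerm, isHistory_cons_cons, h, hb, transientMatrix, pathWeight,
        lastValue_cons g s (List.cons_ne_nil b r), mul_assoc]

/-- Histories of length `t + 1` contribute `ρ ⬝ Qᵗ v`. -/
theorem sum_lvalTerm_listsLengthLE (g : S → ℝ) (m : ℕ) :
    ∑ l ∈ listsLengthLE S m, D.lvalTerm ρ π (lastValue g) l =
      ρ ⬝ᵥ ((∑ t ∈ Finset.range m, D.transientMatrix π ^ t) *ᵥ D.terminalVec g) := by
  induction m generalizing ρ with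
  | zero => simp [listsLengthLE]
  | succ m ih =>
    simp only [sum_listsLengthLE_succ lvalTerm_nil, lvalTerm_cons, ← Finset.mul_sum,
      Finset.sum_add_distrib, Finset.sum_ite_eq', mem_listsLengthLE, List.length_nil,
      zero_le, if_true]
    rw [geom_sum_succ, add_mulVec, one_mulVec, ← mulVec_mulVec]
    simp_rw [Finset.sum_comm (s := listsLengthLE S m), ← Finset.mul_sum, ih, unitMass_dotProduct]
    simp only [dotProduct, mulVec, Pi.add_apply, mul_add, Finset.sum_add_distrib]
    ring

theorem lval_unitMass_one (hterm : D.Terminates) (hπ : ∀ j, IsDist (π j)) (s : S) :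
    D.lval (unitMass s) π (fun _ => 1) = 1 := by
  cases hs : D.isTerminal s
  · exact hterm s hs π hπ
  rw [lval_eq_tsum, tsum_eq_single [s]]
  · simp [lvalTerm, isHistory_singleton, hs, unitMass, pathWeight]
  rintro (_ | ⟨a, _ | ⟨b, r⟩⟩) hl
  · rfl
  · have ha : a ≠ s := by simpa using hl
    simp [lvalTerm, unitMass, ha]
  · by_cases ha : a = s
    · simp [lvalTerm, isHistory_cons_cons, ha, hs]
    · simp [lvalTerm, unitMass, ha]

lemma summable_lvalTerm_unitMass_one (hterm : D.Terminates) (hπ : ∀ j, IsDist (π j)) (s : S) :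
    Summable (D.lvalTerm (unitMass s) π fun _ => 1) := by
  by_contra h
  have h1 := lval_unitMass_one hterm hπ s
  rw [lval_eq_tsum, tsum_eq_zero_of_not_summable h] at h1
  exact zero_ne_one h1

lemma summable_lvalTerm (hterm : D.Terminates) (hπ : ∀ j, IsDist (π j))
    {C : ℝ} (hf : ∀ l, |f l| ≤ C) : Summable (D.lvalTerm ρ π f) := by
  rw [show D.lvalTerm ρ π f = fun l => ∑ s, ρ s * D.lvalTerm (unitMass s) π f l from
    funext lvalTerm_eq_sum_unitMass]
  refine summable_sum fun s _ => Summable.mul_left (ρ s) ?_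
  refine ((summable_lvalTerm_unitMass_one hterm hπ s).mul_left C).of_norm_bounded fun l => ?_
  have h0 : 0 ≤ D.lvalTerm (unitMass s) π (fun _ => 1) l := lvalTerm_unitMass_one_nonneg hπ s l
  rw [lvalTerm_eq_mul, Real.norm_eq_abs, abs_mul, abs_of_nonneg h0, mul_comm]
  exact mul_le_mul_of_nonneg_right (hf l) h0

lemma pow_transientMatrix_mulVec_one (hπ : ∀ j, IsDist (π j)) (m : ℕ) :
    D.transientMatrix π ^ m *ᵥ 1 =
      1 - (∑ t ∈ Finset.range m, D.transientMatrix π ^ t) *ᵥ D.terminalVec 1 := by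
  have h := congrArg (· *ᵥ (1 : S → ℝ)) (geom_sum_mul_neg (D.transientMatrix π) m)
  simp only [← mulVec_mulVec, sub_mulVec, one_mulVec, transientMatrix_mulVec_one hπ,
    sub_sub_cancel] at h
  rw [h, sub_sub_cancel]

theorem tendsto_pow_transientMatrix (hterm : D.Terminates) (hπ : ∀ j, IsDist (π j)) :
    Tendsto (fun t => D.transientMatrix π ^ t) atTop (𝓝 0) := by
  have hrow (s : S) : Tendsto (fun t => (D.transientMatrix π ^ t *ᵥ 1) s) atTop (𝓝 0) := by
    have h := tendsto_sum_listsLengthLE (summable_lvalTerm_unitMass_one hterm hπ s)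
    rw [← lval_eq_tsum, lval_unitMass_one hterm hπ s, ← lvalTerm_lastValue_one] at h
    simp_rw [sum_lvalTerm_listsLengthLE, unitMass_dotProduct] at h
    simpa [pow_transientMatrix_mulVec_one hπ] using h.const_sub 1
  refine tendsto_pi_nhds.2 fun s => tendsto_pi_nhds.2 fun s' => ?_
  refine tendsto_of_tendsto_of_tendsto_of_le_of_le tendsto_const_nhds (hrow s)
    (fun t => pow_apply_nonneg (transientMatrix_nonneg hπ) t s s') fun t => ?_
  simpa [mulVec, dotProduct] using Finset.single_le_sum
    (fun k _ => pow_apply_nonneg (transientMatrix_nonneg hπ) t s k) (Finset.mem_univ s')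

theorem isUnit_one_sub_transientMatrix (hterm : D.Terminates) (hπ : ∀ j, IsDist (π j)) :
    IsUnit (1 - D.transientMatrix π) := by
  have h : Tendsto (fun m => ((1 - D.transientMatrix π) *
      ∑ t ∈ Finset.range m, D.transientMatrix π ^ t).det) atTop (𝓝 1) := by
    simp_rw [mul_neg_geom_sum]
    simpa [Function.comp_def] using (continuous_id.matrix_det.tendsto _).comp
      ((tendsto_pow_transientMatrix hterm hπ).const_sub 1)
  obtain ⟨m, hm⟩ := (h.eventually_ne one_ne_zero).exists
  rw [det_mul] at hm
  exact (isUnit_iff_isUnit_det _).2 (left_ne_zero_of_mul hm).isUnit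

theorem tendsto_geom_sum_transientMatrix (hterm : D.Terminates) (hπ : ∀ j, IsDist (π j)) :
    Tendsto (fun m => ∑ t ∈ Finset.range m, D.transientMatrix π ^ t) atTop
      (𝓝 (D.fundamentalMatrix π)) := by
  have hu := (isUnit_iff_isUnit_det _).1 (isUnit_one_sub_transientMatrix hterm hπ)
  have h (m : ℕ) : ∑ t ∈ Finset.range m, D.transientMatrix π ^ t =
      D.fundamentalMatrix π * (1 - D.transientMatrix π ^ m) := by
    rw [fundamentalMatrix, ← mul_neg_geom_sum, ← mul_assoc, nonsing_inv_mul _ hu, one_mul]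
  simp_rw [h]
  simpa using
    ((tendsto_pow_transientMatrix hterm hπ).const_sub 1).const_mul (D.fundamentalMatrix π)

theorem lval_lastValue_eq (hterm : D.Terminates) (hπ : ∀ j, IsDist (π j)) (g : S → ℝ) :
    D.lval ρ π (lastValue g) = ρ ⬝ᵥ (D.fundamentalMatrix π *ᵥ D.terminalVec g) := by
  have h := tendsto_sum_listsLengthLE (summable_lvalTerm (ρ := ρ) hterm hπ (abs_lastValue_le g))
  simp_rw [sum_lvalTerm_listsLengthLE] at h
  exact tendsto_nhds_unique h <|
    ((continuous_const.dotProduct (continuous_id.matrix_mulVec continuous_const)).tendsto _).comp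
      (tendsto_geom_sum_transientMatrix hterm hπ)

theorem exists_norm_fundamentalMatrix_le (hterm : D.Terminates) :
    ∃ C, ∀ π : Fin n → A → ℝ, (∀ j, IsDist (π j)) → ‖D.fundamentalMatrix π‖ ≤ C := by
  refine (isCompact_setOf_forall_isDist (Fin n) A).exists_bound_of_continuousOn fun π hπ => ?_
  have hu := (isUnit_iff_isUnit_det _).1 (isUnit_one_sub_transientMatrix hterm hπ)
  exact (ContinuousAt.comp (f := fun π => 1 - D.transientMatrix π)
    (continuousAt_matrix_inv _ (NormedRing.inverse_continuousAt hu.unit))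
    (continuous_const.sub D.continuous_transientMatrix).continuousAt).continuousWithinAt

lemma norm_transientMatrix_sub_le (π π' : Fin n → A → ℝ) :
    ‖D.transientMatrix π - D.transientMatrix π'‖ ≤ ∑ j, ∑ a, |π j a - π' j a| := by
  refine norm_le_of_forall_sum_abs_le (by positivity) fun s => ?_
  by_cases hs : D.isTerminal s
  · simp only [Matrix.sub_apply, transientMatrix, of_apply, hs, if_true, sub_zero, abs_zero,
      Finset.sum_const_zero]
    positivity
  set j := D.idx s
  calc ∑ s', |(D.transientMatrix π - D.transientMatrix π') s s'|
      = ∑ s', |∑ a, (π j a - π' j a) * D.tr s a s'| := by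
        simp [transientMatrix, hs, step, Tpol, j, sub_mul]
    _ ≤ ∑ s', ∑ a, |π j a - π' j a| * D.tr s a s' := by
        refine Finset.sum_le_sum fun s' _ => (Finset.abs_sum_le_sum_abs _ _).trans_eq ?_
        simp [abs_mul, abs_of_nonneg (D.tr_nonneg _ _ _)]
    _ = ∑ a, |π j a - π' j a| := by
        rw [Finset.sum_comm]
        simp [← Finset.mul_sum, D.tr_sum]
    _ ≤ ∑ j, ∑ a, |π j a - π' j a| :=
        Finset.single_le_sum (f := fun j => ∑ a, |π j a - π' j a|) (fun _ _ => by positivity)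
          (Finset.mem_univ j)

theorem fundamentalMatrix_sub (hterm : D.Terminates)
    (hπ : ∀ j, IsDist (π j)) (hπ' : ∀ j, IsDist (π' j)) :
    D.fundamentalMatrix π - D.fundamentalMatrix π' =
      D.fundamentalMatrix π * (D.transientMatrix π - D.transientMatrix π') *
        D.fundamentalMatrix π' := by
  rw [fundamentalMatrix, fundamentalMatrix, inv_sub_inv (iff_of_true
      (isUnit_one_sub_transientMatrix hterm hπ) (isUnit_one_sub_transientMatrix hterm hπ')),
    sub_sub_sub_cancel_left]

theorem abs_lval_lastValue_sub_le (hterm : D.Terminates) {C : ℝ}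
    (hC : ∀ π : Fin n → A → ℝ, (∀ j, IsDist (π j)) → ‖D.fundamentalMatrix π‖ ≤ C)
    (hπ : ∀ j, IsDist (π j)) (hπ' : ∀ j, IsDist (π' j)) (hρ : IsDist ρ) (g : S → ℝ) :
    |D.lval ρ π (lastValue g) - D.lval ρ π' (lastValue g)| ≤
      C ^ 2 * ‖D.terminalVec g‖ * ∑ j, ∑ a, |π j a - π' j a| := by
  set N := D.fundamentalMatrix
  set Q := D.transientMatrix
  have hC0 : 0 ≤ C := (norm_nonneg _).trans (hC π hπ)
  calc |D.lval ρ π (lastValue g) - D.lval ρ π' (lastValue g)|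
      = |ρ ⬝ᵥ ((N π * (Q π - Q π') * N π') *ᵥ D.terminalVec g)| := by
        rw [lval_lastValue_eq hterm hπ, lval_lastValue_eq hterm hπ', ← dotProduct_sub,
          ← sub_mulVec, fundamentalMatrix_sub hterm hπ hπ']
    _ ≤ ‖N π‖ * ‖Q π - Q π'‖ * ‖N π'‖ * ‖D.terminalVec g‖ := by
        refine (abs_dotProduct_le_norm hρ _).trans <| (linfty_opNorm_mulVec _ _).trans ?_
        gcongr
        exact (norm_mul_le _ _).trans (by gcongr; exact norm_mul_le _ _)
    _ ≤ C * (∑ j, ∑ a, |π j a - π' j a|) * C * ‖D.terminalVec g‖ := by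
        gcongr
        exacts [hC π hπ, norm_transientMatrix_sub_le π π', hC π' hπ']
    _ = C ^ 2 * ‖D.terminalVec g‖ * ∑ j, ∑ a, |π j a - π' j a| := by ring

end DP

/-- Corollary: the ex ante expected utility is Lipschitz-like in the joint
dependant policy. For every terminating decision problem there is `λ ≥ 0` such that for all
joint dependant policies `π, π' ∈ Δ(A)^n` with `‖π − π'‖₁ < 1`,
`|E[u|π] − E[u|π']| ≤ λ ‖π − π'‖₁ / (1 − ‖π − π'‖₁)`. -/
theorem stmt15 {S A : Type} [Fintype S] [Fintype A] [DecidableEq S] {n : ℕ}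
    (D : DP S A n) (hterm : D.Terminates) :
    ∃ lam : ℝ, 0 ≤ lam ∧
      ∀ π π' : Fin n → A → ℝ, (∀ j, IsDist (π j)) → (∀ j, IsDist (π' j)) →
        (∑ j, ∑ a, |π j a - π' j a|) < 1 →
        |D.EUj D.P0 π - D.EUj D.P0 π'| ≤
          lam * (∑ j, ∑ a, |π j a - π' j a|) / (1 - ∑ j, ∑ a, |π j a - π' j a|) := by
  obtain ⟨C, hC⟩ := D.exists_norm_fundamentalMatrix_le hterm
  refine ⟨C ^ 2 * ‖D.terminalVec D.u‖, by positivity, fun π π' hπ hπ' hd => ?_⟩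
  have hLip := DP.abs_lval_lastValue_sub_le hterm hC hπ hπ' ⟨D.P0_nonneg, D.P0_sum⟩ D.u
  rw [← DP.EUj_eq_lval_lastValue, ← DP.EUj_eq_lval_lastValue] at hLip
  have hd0 : 0 ≤ ∑ j, ∑ a, |π j a - π' j a| := by positivity
  exact hLip.trans (le_div_self (by positivity) (by linarith) (by linarith))
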